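/- arXiv:2209.04276 — 8 statements merged into one kernel-verified Lean document; each statement's English description precedes it below -/
import Mathlib

section
/- Let C ≥ 1 and n ≥ 1 be integers and let h = ⌈n/2⌉. Then Σ_{w : {1,…,n} → {1,…,C}} #{i ∈ {1,…,h} : val(w,i) = ⌊i/C⌋ + 1} = Σ_{i=1}^{h} Σ_{m=1}^{C} Σ_{T+S=⌊i/C⌋, T,S ≥ 0} [ binom(i−1, T) · m^T · (C−m)^{i−1−T} ] · [ binom(n−i, S) · (m−1)^S · (C−m+1)^{n−i−S} ], where 0^0 = 1. -/
open Finset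

/-- The card value at (1-based) position `i.val + 1` of the word `w : Fin n → Fin C`,
where the value `w j` encodes the pile (increasing sequence) number `(w j).val + 1 ∈ {1, …, C}`:
`val(w,i) = 1 + #{j < i : w(j) ≤ w(i)} + #{j > i : w(j) < w(i)}`. -/
def pileVal (n C : ℕ) (w : Fin n → Fin C) (i : Fin n) : ℕ :=
  1 + (Finset.univ.filter (fun j : Fin n => j < i ∧ w j ≤ w i)).card
    + (Finset.univ.filter (fun j : Fin n => i < j ∧ w j < w i)).card

/-
Swapping the two sums, it suffices to count, for each position `i` and value `k + 1`, the words
`w` with `val(w, i) = k + 1`. Fix the pile `m = w i` and the two counts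
`T = #{j < i | w j ≤ m}`, `S = #{j > i | w j < m}` with `T + S = k`. The letters before and after
`i` are then independent words, the first with exactly `T` letters in `{1, …, m}` and the second
with exactly `S` letters in `{1, …, m - 1}`; each is counted by choosing the positions of these
letters, which gives the two binomial factors.
-/

theorem sum_Icc_one_eq_sum_fin {M : Type*} [AddCommMonoid M] (n : ℕ) (f : ℕ → M) :
    ∑ i ∈ Icc 1 n, f i = ∑ i : Fin n, f (i + 1) := by
  rw [Fin.sum_univ_eq_sum_range (fun i => f (i + 1)), range_eq_Ico, sum_Ico_add', zero_add,
    ← Order.succ_eq_add_one, Ico_succ_right_eq_Icc]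

theorem card_piFinset_ite_mem {ι α : Type*} [Fintype ι] [DecidableEq ι] (s : Finset ι)
    (A B : Finset α) :
    #(Fintype.piFinset fun j => if j ∈ s then A else B) =
      #A ^ #s * #B ^ (Fintype.card ι - #s) := by
  rw [Fintype.card_piFinset, prod_apply_ite, prod_const, prod_const, filter_mem_eq_inter,
    filter_notMem_eq_sdiff, univ_inter, card_univ_sdiff]

theorem card_filter_card_filter_mem_eq {ι α : Type*} [Fintype ι] [DecidableEq ι] [Fintype α]
    [DecidableEq α] (A : Finset α) (k : ℕ) :
    #{f : ι → α | #{j | f j ∈ A} = k} =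
      (Fintype.card ι).choose k * #A ^ k * (Fintype.card α - #A) ^ (Fintype.card ι - k) := by
  rw [card_eq_sum_card_fiberwise (f := fun f : ι → α => ({j | f j ∈ A} : Finset ι))
    (t := powersetCard k univ) (fun f hf => by simpa using hf)]
  have fiber : ∀ s ∈ powersetCard k (univ : Finset ι),
      #{f ∈ {f : ι → α | #{j | f j ∈ A} = k} | ({j | f j ∈ A} : Finset ι) = s} =
        #A ^ k * (Fintype.card α - #A) ^ (Fintype.card ι - k) := by
    intro s hs
    obtain rfl := (mem_powersetCard.1 hs).2
    have fiber_eq : ({f ∈ {f : ι → α | #{j | f j ∈ A} = #s} | ({j | f j ∈ A} : Finset ι) = s} :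
        Finset _) = Fintype.piFinset fun j => if j ∈ s then A else Aᶜ := by
      ext f
      simp only [mem_filter, mem_univ, true_and, Fintype.mem_piFinset, Finset.ext_iff]
      constructor
      · rintro ⟨-, hf⟩ j
        split_ifs with h <;> simp_all
      · intro hf
        have hs : ∀ j, f j ∈ A ↔ j ∈ s := fun j => by
          have := hf j; split_ifs at this with h <;> simp_all
        exact ⟨congrArg card (Finset.ext (by simpa using hs)), hs⟩
    rw [fiber_eq, card_piFinset_ite_mem, card_compl]
  rw [sum_congr rfl fiber, sum_const, card_powersetCard, card_univ, smul_eq_mul, mul_assoc]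

theorem card_filter_subtype {ι : Type*} [Fintype ι] (p q : ι → Prop) [DecidablePred p]
    [DecidablePred q] : #{j : {j // p j} | q j} = #{j | p j ∧ q j} := by
  rw [← Fintype.card_subtype, ← Fintype.card_subtype]
  exact Fintype.card_congr (Equiv.subtypeSubtypeEquivSubtypeInter p q)

theorem card_filter_apply_eq_and_card_lt_and_card_gt {ι α : Type*} [Fintype ι] [LinearOrder ι]
    [Fintype α] [DecidableEq α] (i : ι) (v : α) (A B : Finset α) (T S : ℕ) :
    #{w : ι → α | w i = v ∧ #{j | j < i ∧ w j ∈ A} = T ∧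
        #{j | i < j ∧ w j ∈ B} = S} =
      #{f : {j // j < i} → α | #{j | f j ∈ A} = T} *
        #{g : {j // i < j} → α | #{j | g j ∈ B} = S} := by
  rw [← card_product]
  refine card_nbij' (fun w => (fun j => w j, fun j => w j))
    (fun fg j => if h : j < i then fg.1 ⟨j, h⟩ else if h' : i < j then fg.2 ⟨j, h'⟩ else v)
    ?_ ?_ ?_ ?_
  · intro w hw
    simp only [coe_filter, mem_univ, true_and, Set.mem_ofPred_eq, coe_product,
      Set.mem_prod] at hw ⊢
    simp only [card_filter_subtype (· < i) (fun j => w j ∈ A),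
      card_filter_subtype (i < ·) (fun j => w j ∈ B), hw, and_self]
  · rintro ⟨f, g⟩ hfg
    simp only [coe_filter, mem_univ, true_and, Set.mem_ofPred_eq, coe_product,
      Set.mem_prod] at hfg ⊢
    refine ⟨by simp, ?_, ?_⟩
    · rw [← hfg.1, ← card_filter_subtype]
      congr 1
      ext j; simp [j.2]
    · rw [← hfg.2, ← card_filter_subtype]
      congr 1
      ext j; simp [j.2, j.2.not_gt]
  · intro w hw
    simp only [coe_filter, mem_univ, true_and, Set.mem_ofPred_eq] at hw
    funext j
    rcases lt_trichotomy j i with h | rfl | h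
    · simp [h]
    · simp [hw.1]
    · simp [h, h.not_gt]
  · rintro ⟨f, g⟩ -
    ext j
    · simp [j.2]
    · simp [j.2, j.2.not_gt]

theorem card_filter_apply_eq_and_card_le_and_card_lt (n C : ℕ) (i : Fin n) (v : Fin C)
    (T S : ℕ) :
    #{w : Fin n → Fin C | w i = v ∧ #{j | j < i ∧ w j ≤ w i} = T ∧
        #{j | i < j ∧ w j < w i} = S} =
      (i.val.choose T * (v + 1) ^ T * (C - (v + 1)) ^ (i.val - T)) *
        ((n - (i + 1)).choose S * v.val ^ S * (C - v) ^ (n - (i + 1) - S)) := by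
  have hv : univ.filter (fun w : Fin n → Fin C => w i = v ∧ #{j | j < i ∧ w j ≤ w i} = T ∧
      #{j | i < j ∧ w j < w i} = S) = univ.filter (fun w : Fin n → Fin C => w i = v ∧
      #{j | j < i ∧ w j ∈ Iic v} = T ∧ #{j | i < j ∧ w j ∈ Iio v} = S) := by
    refine filter_congr fun w _ => ?_
    constructor <;> rintro ⟨rfl, h⟩ <;> simpa using h
  have hn : n - (i + 1) = n - 1 - i := by omega
  rw [hv, card_filter_apply_eq_and_card_lt_and_card_gt, card_filter_card_filter_mem_eq,
    card_filter_card_filter_mem_eq, Fin.card_Iic, Fin.card_Iio, Fintype.card_fin, hn,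
    Fintype.card_subtype, filter_gt_eq_Iio, Fin.card_Iio, Fintype.card_subtype, filter_lt_eq_Ioi,
    Fin.card_Ioi]

theorem card_filter_pileVal_eq (n C : ℕ) (i : Fin n) (k : ℕ) :
    #{w : Fin n → Fin C | pileVal n C w i = k + 1} =
      ∑ m ∈ Icc 1 C, ∑ p ∈ antidiagonal k,
        (i.val.choose p.1 * m ^ p.1 * (C - m) ^ (i.val - p.1)) *
          ((n - (i + 1)).choose p.2 * (m - 1) ^ p.2 * (C - m + 1) ^ (n - (i + 1) - p.2)) := by
  let counts (w : Fin n → Fin C) : Fin C × ℕ × ℕ :=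
    (w i, #{j | j < i ∧ w j ≤ w i}, #{j | i < j ∧ w j < w i})
  rw [card_eq_sum_card_fiberwise (f := counts) (t := univ ×ˢ antidiagonal k) (fun w hw => by
      rw [mem_coe, mem_filter, pileVal] at hw
      rw [mem_coe, mem_product, HasAntidiagonal.mem_antidiagonal]
      exact ⟨mem_univ _, by dsimp only [counts]; omega⟩),
    sum_product, sum_Icc_one_eq_sum_fin]
  refine sum_congr rfl fun v _ => sum_congr rfl fun p hp => ?_
  have fiber : ∀ w : Fin n → Fin C, (pileVal n C w i = k + 1 ∧ counts w = (v, p)) ↔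
      (w i = v ∧ #{j | j < i ∧ w j ≤ w i} = p.1 ∧ #{j | i < j ∧ w j < w i} = p.2) := by
    intro w
    rw [HasAntidiagonal.mem_antidiagonal] at hp
    simp only [counts, pileVal, Prod.ext_iff]
    omega
  have hv : C - (v + 1) + 1 = C - v := by omega
  rw [filter_filter, filter_congr fun w _ => fiber w, card_filter_apply_eq_and_card_le_and_card_lt,
    Nat.add_sub_cancel, hv]

theorem first_moment_top_half_C_sequences_general
    (C n : ℕ) (h : ℕ) (hh : h = (n + 1) / 2) :
    (∑ w : Fin n → Fin C,
      (Finset.univ.filter (fun i : Fin n =>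
        i.val + 1 ≤ h ∧ pileVal n C w i = (i.val + 1) / C + 1)).card) =
    ∑ i ∈ Finset.Icc 1 h, ∑ m ∈ Finset.Icc 1 C,
      ∑ p ∈ Finset.HasAntidiagonal.antidiagonal (i / C),
        (Nat.choose (i - 1) p.1 * m ^ p.1 * (C - m) ^ (i - 1 - p.1)) *
          (Nat.choose (n - i) p.2 * (m - 1) ^ p.2 * (C - m + 1) ^ (n - i - p.2)) := by
  set F : ℕ → ℕ := fun i => ∑ m ∈ Icc 1 C, ∑ p ∈ antidiagonal (i / C),
    (Nat.choose (i - 1) p.1 * m ^ p.1 * (C - m) ^ (i - 1 - p.1)) *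
      (Nat.choose (n - i) p.2 * (m - 1) ^ p.2 * (C - m + 1) ^ (n - i - p.2))
  have hhn : h ≤ n := by omega
  calc _ = ∑ i : Fin n,
          #{w : Fin n → Fin C | i.val + 1 ≤ h ∧ pileVal n C w i = (i + 1) / C + 1} := by
        simp only [card_filter]
        exact sum_comm
    _ = ∑ i : Fin n, if i.val + 1 ≤ h then F (i + 1) else 0 := by
        refine sum_congr rfl fun i _ => ?_
        split_ifs with hi
        · simp only [hi, true_and, card_filter_pileVal_eq, F, Nat.add_sub_cancel]
        · simp [hi]
    _ = ∑ i ∈ Icc 1 n, if i ≤ h then F i else 0 :=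
        (sum_Icc_one_eq_sum_fin n fun i => if i ≤ h then F i else 0).symm
    _ = ∑ i ∈ Icc 1 h, F i := by
        rw [← sum_filter]
        congr 1
        ext i
        simp only [mem_filter, mem_Icc]
        omega

theorem first_moment_top_half_C_sequences
    (C n : ℕ) (hC : 1 ≤ C) (hn : 1 ≤ n) (h : ℕ) (hh : h = (n + 1) / 2) :
    (∑ w : Fin n → Fin C,
      (Finset.univ.filter (fun i : Fin n =>
        i.val + 1 ≤ h ∧ pileVal n C w i = (i.val + 1) / C + 1)).card) =
    ∑ i ∈ Finset.Icc 1 h, ∑ m ∈ Finset.Icc 1 C,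
      ∑ p ∈ Finset.HasAntidiagonal.antidiagonal (i / C),
        (Nat.choose (i - 1) p.1 * m ^ p.1 * (C - m) ^ (i - 1 - p.1)) *
          (Nat.choose (n - i) p.2 * (m - 1) ^ p.2 * (C - m + 1) ^ (n - i - p.2)) :=
  first_moment_top_half_C_sequences_general C n h hh
end

section
/- Let a₁, a₂ ≥ 1 and s ≥ 1 be integers and let c = ⌊(a₁+a₂)/2⌋ + 1. Then the polynomial G satisfies the recurrence G(a₁, a₂, s) = q^{δ(c, a₁)} · G(a₁−1, a₂, s) + q^{δ(c, s+a₂−1)} · G(a₁, a₂−1, s), where δ(x,y) = 1 if x = y and 0 otherwise. -/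
open Finset

/-- The card value at position `i` determined by the set `A` (positions of the first
sequence) and the starting value `s` of the second sequence:
`v(A,i) = #{j ≤ i : j ∈ A}` if `i ∈ A` and `v(A,i) = (s−1) + #{j ≤ i : j ∉ A}` otherwise. -/
def halfVal (s : ℕ) (A : Finset ℕ) (i : ℕ) : ℕ :=
  if i ∈ A then ((Finset.Icc 1 i).filter (fun j => j ∈ A)).card
  else (s - 1) + ((Finset.Icc 1 i).filter (fun j => j ∉ A)).card

/-- The number of positions `i ∈ {1, …, a₁+a₂}` guessed correctly under the optimal
strategy guess `⌊i/2⌋ + 1`. -/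
def halfCorrect (a1 a2 s : ℕ) (A : Finset ℕ) : ℕ :=
  ((Finset.Icc 1 (a1 + a2)).filter (fun i => halfVal s A i = i / 2 + 1)).card

/-- The generating function `G(a₁, a₂, s) = Σ_A q^{c(A)}`, where `A` ranges over all
subsets of `{1, …, a₁+a₂}` of size `a₁`. -/
noncomputable def G (a1 a2 s : ℕ) : Polynomial ℚ :=
  ∑ A ∈ Finset.powersetCard a1 (Finset.Icc 1 (a1 + a2)),
    (Polynomial.X : Polynomial ℚ) ^ halfCorrect a1 a2 s A

/-- Kronecker delta. -/
def kdelta (x y : ℕ) : ℕ := if x = y then 1 else 0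

/-!
Split the subsets `A ⊆ {1, …, n+1}` according to whether the last position `n+1` belongs to `A`.
The card value at a position only depends on `A` up to that position, so the first `n` positions
contribute exactly as in `G(a₁-1,a₂,s)` resp. `G(a₁,a₂-1,s)`. At position `n+1` the card value is `#A` if `n+1 ∈ A`
and `(s-1) + (n+1-#A)` otherwise, i.e. `a₁` resp. `s+a₂-1`; the last guess `⌊(n+1)/2⌋+1 = c` is
correct exactly when these equal `c`, which produces the factors `q^{δ(c,·)}`.
-/

lemma halfVal_congr (s : ℕ) {A B : Finset ℕ} {i : ℕ} (h : ∀ j ≤ i, j ∈ A ↔ j ∈ B) :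
    halfVal s A i = halfVal s B i := by
  have hmem : ∀ j ∈ Icc 1 i, j ∈ A ↔ j ∈ B := fun j hj => h j (mem_Icc.mp hj).2
  unfold halfVal
  rw [filter_congr hmem, filter_congr fun j hj => not_congr (hmem j hj)]
  simp only [h i le_rfl]

lemma halfVal_of_mem {s n : ℕ} {A : Finset ℕ} (hA : A ⊆ Icc 1 n) (hn : n ∈ A) :
    halfVal s A n = #A := by
  rw [halfVal, if_pos hn, filter_mem_eq_inter, inter_eq_right.mpr hA]

lemma halfVal_of_notMem {s n : ℕ} {A : Finset ℕ} (hA : A ⊆ Icc 1 n) (hn : n ∉ A) :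
    halfVal s A n = s - 1 + (n - #A) := by
  have hsplit := card_filter_add_card_filter_not (s := Icc 1 n) (p := (· ∈ A))
  rw [filter_mem_eq_inter, inter_eq_right.mpr hA, Nat.card_Icc] at hsplit
  rw [halfVal, if_neg hn]
  omega

def correctCount (s : ℕ) (A : Finset ℕ) (n : ℕ) : ℕ :=
  #{i ∈ Icc 1 n | halfVal s A i = i / 2 + 1}

lemma correctCount_succ (s : ℕ) (A : Finset ℕ) (n : ℕ) :
    correctCount s A (n + 1) =
      correctCount s A n + kdelta ((n + 1) / 2 + 1) (halfVal s A (n + 1)) := by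
  have hnew : n + 1 ∉ Icc 1 n := by simp
  rw [correctCount, ← insert_Icc_right_eq_Icc_add_one (by omega), filter_insert, kdelta]
  by_cases h : halfVal s A (n + 1) = (n + 1) / 2 + 1
  · rw [if_pos h, if_pos h.symm, card_insert_of_notMem (fun h' => hnew (mem_filter.mp h').1)]
    rfl
  · rw [if_neg h, if_neg (Ne.symm h)]
    rfl

lemma correctCount_insert_of_lt (s : ℕ) (A : Finset ℕ) {m n : ℕ} (hn : n < m) :
    correctCount s (insert m A) n = correctCount s A n := by
  refine congrArg card (filter_congr fun i hi => ?_)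
  rw [halfVal_congr s fun j hj => ?_]
  have : j ≠ m := by have := (mem_Icc.mp hi).2; omega
  simp [this]

lemma correctCount_insert_succ (s : ℕ) {B : Finset ℕ} {n : ℕ} (hB : B ⊆ Icc 1 n) :
    correctCount s (insert (n + 1) B) (n + 1) =
      correctCount s B n + kdelta ((n + 1) / 2 + 1) (#B + 1) := by
  have hnew : n + 1 ∉ B := fun h => by have := mem_Icc.mp (hB h); omega
  have hsub : insert (n + 1) B ⊆ Icc 1 (n + 1) :=
    insert_subset (by simp) (hB.trans (Icc_subset_Icc_right (by omega)))
  rw [correctCount_succ, halfVal_of_mem hsub (mem_insert_self _ _), card_insert_of_notMem hnew,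
    correctCount_insert_of_lt s B (Nat.lt_succ_self n)]

lemma correctCount_succ_of_subset (s : ℕ) {A : Finset ℕ} {n : ℕ} (hA : A ⊆ Icc 1 n) :
    correctCount s A (n + 1) =
      correctCount s A n + kdelta ((n + 1) / 2 + 1) (s - 1 + (n + 1 - #A)) := by
  have hnew : n + 1 ∉ A := fun h => by have := mem_Icc.mp (hA h); omega
  rw [correctCount_succ, halfVal_of_notMem (hA.trans (Icc_subset_Icc_right (by omega))) hnew]

lemma sum_powersetCard_Icc_succ {R : Type*} [AddCommMonoid R] (f : Finset ℕ → R) (k n : ℕ) :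
    ∑ A ∈ powersetCard (k + 1) (Icc 1 (n + 1)), f A =
      ∑ B ∈ powersetCard k (Icc 1 n), f (insert (n + 1) B) +
        ∑ A ∈ powersetCard (k + 1) (Icc 1 n), f A := by
  have hnew : n + 1 ∉ Icc 1 n := by simp
  have hinj : Set.InjOn (insert (n + 1)) (powersetCard k (Icc 1 n) : Set (Finset ℕ)) :=
    fun B hB B' hB' h => by
      rw [← erase_insert (notMem_mono (mem_powersetCard.mp hB).1 hnew),
        ← erase_insert (notMem_mono (mem_powersetCard.mp hB').1 hnew), h]
  have hdisj : Disjoint (powersetCard (k + 1) (Icc 1 n))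
      ((powersetCard k (Icc 1 n)).image (insert (n + 1))) := by
    refine disjoint_left.mpr fun A hA hA' => ?_
    obtain ⟨B, -, rfl⟩ := mem_image.mp hA'
    exact hnew ((mem_powersetCard.mp hA).1 (mem_insert_self _ _))
  rw [← insert_Icc_right_eq_Icc_add_one (by omega), powersetCard_succ_insert hnew,
    sum_union hdisj, sum_image hinj, add_comm]

theorem G_recurrence (a1 a2 s : ℕ) (ha1 : 1 ≤ a1) (ha2 : 1 ≤ a2) (hs : 1 ≤ s)
    (c : ℕ) (hc : c = (a1 + a2) / 2 + 1) :
    G a1 a2 s =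
      (Polynomial.X : Polynomial ℚ) ^ kdelta c a1 * G (a1 - 1) a2 s
        + (Polynomial.X : Polynomial ℚ) ^ kdelta c (s + a2 - 1) * G a1 (a2 - 1) s := by
  obtain ⟨k, rfl⟩ := Nat.exists_eq_add_of_le' ha1
  obtain ⟨m, rfl⟩ := Nat.exists_eq_add_of_le' ha2
  have hn : k + 1 + (m + 1) = k + m + 1 + 1 := by omega
  have hk : k + (m + 1) = k + m + 1 := by omega
  have hm : k + 1 + m = k + m + 1 := by omega
  simp only [G, halfCorrect, ← correctCount.eq_def, add_tsub_cancel_right, hn, hk, hm, hc]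
  rw [sum_powersetCard_Icc_succ, mul_sum, mul_sum]
  refine congrArg₂ (· + ·) (sum_congr rfl fun B hB => ?_) (sum_congr rfl fun A hA => ?_)
  · obtain ⟨hsub, hcard⟩ := mem_powersetCard.mp hB
    rw [correctCount_insert_succ s hsub, hcard, pow_add, mul_comm]
  · obtain ⟨hsub, hcard⟩ := mem_powersetCard.mp hA
    rw [correctCount_succ_of_subset s hsub, hcard, pow_add, mul_comm]
    congr 3
    omega
end

section
/- Let R be a commutative ℚ-algebra, let h ≥ 0 and r ≥ 1 be integers, and let y₁,…,y_h ∈ R satisfy y_i² = y_i for all i. Then (y₁ + ⋯ + y_h)^r = Σ_{P} [ r! / ∏_{j=1}^{s} (p_j!)^{m_j} ] · [ m! / ∏_{j=1}^{s} m_j! ] · M_m, where the sum is over all partitions P of r, written with distinct parts p₁,…,p_s having multiplicities m₁,…,m_s and total number of parts m = m₁+⋯+m_s, and M_m = Σ_{1 ≤ i₁ < i₂ < … < i_m ≤ h} y_{i₁} y_{i₂} ⋯ y_{i_m}. -/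
/-!
By the multinomial theorem, `(∑ i, y i) ^ r` is the sum over the compositions `k` of `r` indexed
by `Fin h` of `multinomial k * ∏ i, y i ^ k i`. As the `y i` are idempotent, the monomial only
depends on the support `s` of `k` and equals `∏ i ∈ s, y i`. Group the compositions according to
their support `s` and the partition `P` of `r` formed by their nonzero values: on each group the
multinomial coefficient is `r! / ∏ (p_j!) ^ m_j`, and the group has `m! / ∏ m_j!` members, one
for each way of placing the parts of `P`, with their repetitions, on the `m` points of `s`.
-/

open Finset Nat

section Arrangements

variable {ι : Type*} [DecidableEq ι]

def arrangements (s : Finset ι) (M : Multiset ℕ) : Finset (ι → ℕ) :=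
  {k ∈ piAntidiag s M.sum | s.val.map k = M}

variable {s : Finset ι} {M : Multiset ℕ} {k : ι → ℕ}

theorem mem_arrangements :
    k ∈ arrangements s M ↔ (∀ i, k i ≠ 0 → i ∈ s) ∧ s.val.map k = M := by
  simp only [arrangements, mem_filter, mem_piAntidiag]
  constructor
  · rintro ⟨⟨-, hsupp⟩, hmap⟩
    exact ⟨hsupp, hmap⟩
  · rintro ⟨hsupp, rfl⟩
    exact ⟨⟨sum_eq_multiset_sum s k, hsupp⟩, rfl⟩

theorem card_eq_of_mem_arrangements (hk : k ∈ arrangements s M) : #s = M.card := by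
  rw [← (mem_arrangements.1 hk).2, Multiset.card_map, card_val]

theorem apply_eq_zero_of_mem_arrangements (hk : k ∈ arrangements s M) {i : ι} (hi : i ∉ s) :
    k i = 0 := by
  by_contra h0
  exact hi ((mem_arrangements.1 hk).1 i h0)

theorem apply_mem_of_mem_arrangements (hk : k ∈ arrangements s M) {i : ι} (hi : i ∈ s) :
    k i ∈ M := by
  rw [← (mem_arrangements.1 hk).2]
  exact Multiset.mem_map_of_mem k hi

theorem sum_eq_of_mem_arrangements (hk : k ∈ arrangements s M) {t : Finset ι} (hst : s ⊆ t) :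
    ∑ i ∈ t, k i = M.sum := by
  rw [← sum_subset hst fun i _ hi => apply_eq_zero_of_mem_arrangements hk hi,
    sum_eq_multiset_sum, (mem_arrangements.1 hk).2]

theorem arrangements_empty_zero : arrangements (∅ : Finset ι) 0 = {0} := by
  ext k
  simp [mem_arrangements, funext_iff]

theorem mem_arrangements_cons {a : ι} (ha : a ∉ s) :
    k ∈ arrangements (cons a s ha) M ↔
      (∀ i, k i ≠ 0 → i = a ∨ i ∈ s) ∧ k a ::ₘ s.val.map k = M := by
  rw [mem_arrangements, cons_val, Multiset.map_cons]
  simp only [mem_cons]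

theorem map_update_of_notMem {α : Type*} {a : ι} (ha : a ∉ s) (k : ι → α) (v : α) :
    s.val.map (Function.update k a v) = s.val.map k :=
  Multiset.map_congr rfl fun _ hi => Function.update_of_ne (ne_of_mem_of_not_mem hi ha) _ _

theorem card_filter_arrangements_cons {a : ι} (ha : a ∉ s) {v : ℕ} (hv : v ∈ M) :
    #{k ∈ arrangements (cons a s ha) M | k a = v} = #(arrangements s (M.erase v)) := by
  refine card_nbij' (Function.update · a 0) (Function.update · a v) ?_ ?_ ?_ ?_
  · intro k hk
    simp only [coe_filter, Set.mem_ofPred_eq, mem_arrangements_cons] at hk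
    obtain ⟨⟨hsupp, rfl⟩, rfl⟩ := hk
    dsimp only
    refine mem_arrangements.2 ⟨fun i hi => ?_, ?_⟩
    · have hia : i ≠ a := by rintro rfl; simp at hi
      rw [Function.update_of_ne hia] at hi
      exact (hsupp i hi).resolve_left hia
    · rw [map_update_of_notMem ha, Multiset.erase_cons_head]
  · intro k hk
    obtain ⟨hsupp, hmap⟩ := mem_arrangements.1 hk
    dsimp only
    simp only [coe_filter, Set.mem_ofPred_eq, mem_arrangements_cons, Function.update_self,
      and_true]
    refine ⟨fun i hi => ?_, ?_⟩
    · by_cases hia : i = a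
      · exact .inl hia
      · rw [Function.update_of_ne hia] at hi
        exact .inr (hsupp i hi)
    · rw [map_update_of_notMem ha, hmap, Multiset.cons_erase hv]
  · intro k hk
    dsimp only
    rw [Function.update_idem, ← (mem_filter.1 hk).2, Function.update_eq_self]
  · intro k hk
    dsimp only
    rw [Function.update_idem, ← apply_eq_zero_of_mem_arrangements hk ha, Function.update_eq_self]

theorem prod_factorial_count_cons (v : ℕ) (M : Multiset ℕ) :
    ∏ b ∈ (v ::ₘ M).toFinset, ((v ::ₘ M).count b)! =
      (∏ b ∈ M.toFinset, (M.count b)!) * (M.count v + 1) := by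
  have hsplit :
      ∀ b, ((v ::ₘ M).count b)! = (M.count b)! * if b = v then M.count v + 1 else 1 := by
    intro b
    rw [Multiset.count_cons]
    split_ifs with hb
    · subst hb; rw [factorial_succ, mul_comm]
    · simp
  rw [prod_congr rfl fun b _ => hsplit b, prod_mul_distrib, prod_ite_eq', if_pos (by simp)]
  congr 1
  refine (prod_subset (fun b hb => ?_) fun b _ hb => ?_).symm
  · simp_all
  · rw [Multiset.count_eq_zero.2 (by simpa using hb), factorial_zero]

theorem prod_factorial_count_eq_mul {v : ℕ} (hv : v ∈ M) :
    ∏ b ∈ M.toFinset, (M.count b)! =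
      (∏ b ∈ (M.erase v).toFinset, ((M.erase v).count b)!) * M.count v := by
  obtain ⟨M, rfl⟩ := Multiset.exists_cons_of_mem hv
  rw [Multiset.erase_cons_head, prod_factorial_count_cons, Multiset.count_cons_self]

theorem card_arrangements_mul_prod_factorial_count (hM : M.card = #s) :
    #(arrangements s M) * ∏ b ∈ M.toFinset, (M.count b)! = (#s)! := by
  induction s using Finset.cons_induction generalizing M with
  | empty =>
    rw [card_empty, Multiset.card_eq_zero] at hM
    subst hM
    simp [arrangements_empty_zero]
  | cons a s ha ih =>
    have hmaps : ∀ k ∈ arrangements (cons a s ha) M, k a ∈ M.toFinset := fun k hk => by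
      rw [Multiset.mem_toFinset, ← ((mem_arrangements_cons ha).1 hk).2]
      exact Multiset.mem_cons_self _ _
    have hfibre : ∀ v ∈ M.toFinset,
        #{k ∈ arrangements (cons a s ha) M | k a = v} * ∏ b ∈ M.toFinset, (M.count b)! =
          (#s)! * M.count v := fun v hv => by
      have hv : v ∈ M := Multiset.mem_toFinset.1 hv
      rw [card_filter_arrangements_cons ha hv, prod_factorial_count_eq_mul hv, ← mul_assoc,
        ih (by rw [Multiset.card_erase_of_mem hv, hM, card_cons]; rfl)]
    rw [card_eq_sum_card_fiberwise hmaps, sum_mul, sum_congr rfl hfibre, ← mul_sum,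
      Multiset.toFinset_sum_count_eq, hM, card_cons, factorial_succ, mul_comm]

theorem prod_pow_count_mul_multinomial_of_mem_arrangements (hk : k ∈ arrangements s M)
    {t : Finset ι} (hst : s ⊆ t) :
    (∏ p ∈ M.toFinset, p ! ^ M.count p) * Nat.multinomial t k = M.sum ! := by
  have hprod : ∏ i ∈ t, (k i)! = ∏ p ∈ M.toFinset, p ! ^ M.count p := by
    have hvalues : ∏ i ∈ s, (k i)! = ((s.val.map k).map factorial).prod := by
      rw [Multiset.map_map]
      rfl
    rw [← prod_subset hst fun i _ hi => by
        rw [apply_eq_zero_of_mem_arrangements hk hi, factorial_zero],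
      hvalues, (mem_arrangements.1 hk).2, prod_multiset_map_count]
  rw [← hprod, Nat.multinomial_spec, sum_eq_of_mem_arrangements hk hst]

theorem prod_pow_eq_prod_of_mem_arrangements {R : Type*} [CommMonoid R] {y : ι → R}
    (hy : ∀ i, IsIdempotentElem (y i)) (hk : k ∈ arrangements s M) (h0 : 0 ∉ M)
    {t : Finset ι} (hst : s ⊆ t) : ∏ i ∈ t, y i ^ k i = ∏ i ∈ s, y i := by
  rw [← prod_subset hst fun i _ hi => by rw [apply_eq_zero_of_mem_arrangements hk hi, pow_zero]]
  refine prod_congr rfl fun i hi => (hy i).pow_eq ?_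
  exact ne_of_mem_of_not_mem (apply_mem_of_mem_arrangements hk hi) h0

end Arrangements

section Regroup

variable {ι : Type*} [DecidableEq ι] [Fintype ι]

theorem mem_arrangements_support (k : ι → ℕ) :
    k ∈ arrangements {i | k i ≠ 0} ((univ.val.map k).filter (· ≠ 0)) := by
  refine mem_arrangements.2 ⟨fun i hi => by simpa using hi, ?_⟩
  rw [filter_val, Multiset.filter_map]
  rfl

theorem support_eq_of_mem_arrangements {s : Finset ι} {M : Multiset ℕ} {k : ι → ℕ}
    (hk : k ∈ arrangements s M) (h0 : 0 ∉ M) : ({i | k i ≠ 0} : Finset ι) = s := by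
  ext i
  rw [mem_filter_univ]
  exact ⟨(mem_arrangements.1 hk).1 i,
    fun hi => ne_of_mem_of_not_mem (apply_mem_of_mem_arrangements hk hi) h0⟩

theorem Nat.Partition.zero_notMem_parts {r : ℕ} (P : r.Partition) : 0 ∉ P.parts :=
  fun h0 => (P.parts_pos h0).false

theorem Nat.Partition.ofSums_eq_of_mem_arrangements {r : ℕ} {P : r.Partition} {s : Finset ι}
    {k : ι → ℕ} (hk : k ∈ arrangements s P.parts) (hr : (univ.val.map k).sum = r) :
    .ofSums r (univ.val.map k) hr = P := by
  ext1
  rw [← (mem_arrangements.1 hk).2, ← support_eq_of_mem_arrangements hk P.zero_notMem_parts,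
    (mem_arrangements.1 (mem_arrangements_support k)).2]
  rfl

/-- A composition `k` of `r` is determined by its support and by the partition of `r` formed by its
nonzero values. -/
theorem sum_piAntidiag_univ_eq_sum_partition {β : Type*} [AddCommMonoid β] (r : ℕ)
    (f : (ι → ℕ) → β) :
    ∑ k ∈ piAntidiag univ r, f k =
      ∑ P : r.Partition, ∑ s ∈ powersetCard P.parts.card univ,
        ∑ k ∈ arrangements s P.parts, f k := by
  calc ∑ k ∈ piAntidiag univ r, f k
      = ∑ x ∈ univ.sigma fun P : r.Partition =>
          (powersetCard P.parts.card univ).sigma fun s => arrangements s P.parts, f x.2.2 := by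
        refine sum_bij'
          (fun k hk => ⟨.ofSums r (univ.val.map k) (mem_piAntidiag.1 hk).1,
            ({i | k i ≠ 0} : Finset ι), k⟩)
          (fun x _ => x.2.2) (fun k _ => ?_) (fun x hx => ?_) (fun _ _ => rfl) (fun x hx => ?_)
          (fun _ _ => rfl)
        · have hk := mem_arrangements_support k
          simp only [mem_sigma, mem_univ, mem_powersetCard, subset_univ, true_and]
          exact ⟨card_eq_of_mem_arrangements hk, hk⟩
        · simp only [mem_sigma, mem_univ, mem_powersetCard, true_and] at hx
          exact mem_piAntidiag.2 ⟨(sum_eq_of_mem_arrangements hx.2 (subset_univ _)).trans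
            x.1.parts_sum, fun i _ => mem_univ i⟩
        · obtain ⟨P, s, k⟩ := x
          simp only [mem_sigma, mem_univ, mem_powersetCard, true_and] at hx
          obtain rfl := support_eq_of_mem_arrangements hx.2 P.zero_notMem_parts
          exact Sigma.ext (Nat.Partition.ofSums_eq_of_mem_arrangements hx.2
            ((sum_eq_of_mem_arrangements hx.2 (subset_univ _)).trans P.parts_sum)) HEq.rfl
    _ = _ := by
      rw [sum_sigma]
      simp_rw [sum_sigma]

end Regroup

theorem sum_arrangements_multinomial_mul_prod_pow {ι R : Type*} [DecidableEq ι] [Fintype ι]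
    [CommSemiring R] [Algebra ℚ R] {y : ι → R} (hy : ∀ i, IsIdempotentElem (y i)) {r : ℕ}
    (P : r.Partition) {s : Finset ι} (hs : #s = P.parts.card) :
    ∑ k ∈ arrangements s P.parts, (Nat.multinomial univ k : R) * ∏ i, y i ^ k i =
      algebraMap ℚ R
          ((r ! : ℚ) / (∏ p ∈ P.parts.toFinset, ((p ! : ℚ)) ^ (P.parts.count p))
            * ((Multiset.card P.parts)! : ℚ)
            / (∏ p ∈ P.parts.toFinset, (((P.parts.count p)! : ℚ)))) *
        ∏ i ∈ s, y i := by
  have hmultinomial : ∀ k ∈ arrangements s P.parts, (Nat.multinomial univ k : ℚ) =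
      r ! / ∏ p ∈ P.parts.toFinset, ((p ! : ℚ)) ^ (P.parts.count p) := fun k hk => by
    refine eq_div_of_mul_eq (by positivity) ?_
    rw [mul_comm]
    exact_mod_cast P.parts_sum ▸
      prod_pow_count_mul_multinomial_of_mem_arrangements hk (subset_univ s)
  have hcard : (#(arrangements s P.parts) : ℚ) =
      (Multiset.card P.parts)! / ∏ p ∈ P.parts.toFinset, (((P.parts.count p)! : ℚ)) := by
    refine eq_div_of_mul_eq (by positivity) ?_
    rw [← hs]
    exact_mod_cast card_arrangements_mul_prod_factorial_count hs.symm
  rw [sum_congr rfl fun k hk => by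
      rw [prod_pow_eq_prod_of_mem_arrangements hy hk P.zero_notMem_parts (subset_univ s),
        ← map_natCast (algebraMap ℚ R), hmultinomial k hk],
    sum_const, nsmul_eq_mul, ← map_natCast (algebraMap ℚ R), hcard, ← mul_assoc, ← map_mul,
    mul_comm (_ / _), mul_div_assoc]

theorem power_sum_idempotents_partition_expansion_general
    (R : Type*) [CommRing R] [Algebra ℚ R] (h r : ℕ)
    (y : Fin h → R) (hy : ∀ i, y i * y i = y i) :
    (∑ i, y i) ^ r =
      ∑ P : Nat.Partition r,
        algebraMap ℚ R
            ((r ! : ℚ) / (∏ p ∈ P.parts.toFinset, ((p ! : ℚ)) ^ (P.parts.count p))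
              * ((Multiset.card P.parts)! : ℚ)
              / (∏ p ∈ P.parts.toFinset, (((P.parts.count p)! : ℚ)))) *
          ∑ s ∈ Finset.powersetCard (Multiset.card P.parts) (Finset.univ : Finset (Fin h)),
            ∏ i ∈ s, y i := by
  rw [sum_pow_eq_sum_piAntidiag, sum_piAntidiag_univ_eq_sum_partition]
  refine sum_congr rfl fun P _ => ?_
  rw [mul_sum]
  exact sum_congr rfl fun s hs =>
    sum_arrangements_multinomial_mul_prod_pow hy P (mem_powersetCard.1 hs).2

theorem power_sum_idempotents_partition_expansion
    (R : Type*) [CommRing R] [Algebra ℚ R] (h r : ℕ) (hr : 1 ≤ r)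
    (y : Fin h → R) (hy : ∀ i, y i * y i = y i) :
    (∑ i, y i) ^ r =
      ∑ P : Nat.Partition r,
        algebraMap ℚ R
            ((r ! : ℚ) / (∏ p ∈ P.parts.toFinset, ((p ! : ℚ)) ^ (P.parts.count p))
              * ((Multiset.card P.parts)! : ℚ)
              / (∏ p ∈ P.parts.toFinset, (((P.parts.count p)! : ℚ)))) *
          ∑ s ∈ Finset.powersetCard (Multiset.card P.parts) (Finset.univ : Finset (Fin h)),
            ∏ i ∈ s, y i :=
  power_sum_idempotents_partition_expansion_general R h r y hy
end

section
/- Let c and k be non-negative integers with c ≤ k. Then there exists a polynomial R with rational coefficients of degree k such that for every non-negative integer L with L + c ≥ k: Γ(L + c + 1/2) / ( Γ(k + 1/2) · (L + c − k)! ) = ( binom(2L, L) / 4^L ) · R(L). -/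
/-!
Rising one factor at a time, `Γ(L + c + 1/2) = Γ(L + 1/2) · (L + 1/2)(L + 3/2)⋯(L + c − 1/2)`, and
`Γ(n + 1/2) = √π · binom(2n, n) · n! / 4ⁿ`. Dividing by `Γ(k + 1/2) · (L + c − k)!` leaves
`binom(2L, L)/4^L` times `L!/(L − (k − c))!` and the rising product, up to the rational constant
`4^k / (binom(2k, k) · k!)`: a falling factorial of length `k − c` times a rising one of length `c`
in `L + 1/2`, so a polynomial of degree `k`.
-/

open Polynomial Nat

namespace Real

theorem Gamma_add_nat_eq_mul_ascPochhammer {x : ℝ} (hx : 0 < x) (n : ℕ) :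
    Gamma (x + n) = Gamma x * (ascPochhammer ℝ n).eval x := by
  induction n with
  | zero => simp
  | succ n ih =>
    rw [Nat.cast_succ, ← add_assoc, Gamma_add_one (by positivity), ih, ascPochhammer_succ_right]
    simp only [eval_mul, eval_add, eval_X, eval_natCast]
    ring

theorem Gamma_nat_add_half_eq_centralBinom (n : ℕ) :
    Gamma (n + 1 / 2) = √π * n.centralBinom * n ! / 4 ^ n := by
  induction n with
  | zero => simp [← Gamma_one_half_eq]
  | succ n ih =>
    have hrec : ((n + 1 : ℕ) : ℝ) * (n + 1).centralBinom = 2 * (2 * n + 1) * n.centralBinom := by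
      exact_mod_cast succ_mul_centralBinom_succ n
    rw [Nat.cast_succ, add_right_comm, Gamma_add_one (by positivity), ih, factorial_succ, pow_succ]
    push_cast at hrec ⊢
    field_simp
    linear_combination (-2) * hrec

end Real

theorem aeval_descPochhammer_mul_ascPochhammer_comp_add_half {K : Type*} [Field K]
    [CharZero K] (m c : ℕ) (x : K) :
    aeval x (descPochhammer ℚ m * (ascPochhammer ℚ c).comp (X + C (1 / 2))) =
      (descPochhammer K m).eval x * (ascPochhammer K c).eval (x + 1 / 2) := by
  rw [aeval_def, eval₂_eq_eval_map, Polynomial.map_mul, map_comp, descPochhammer_map,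
    ascPochhammer_map]
  simp

theorem degree_descPochhammer_mul_ascPochhammer_comp_add_half (m c : ℕ) :
    (descPochhammer ℚ m * (ascPochhammer ℚ c).comp (X + C (1 / 2))).degree = (m + c : ℕ) := by
  have hasc : ((ascPochhammer ℚ c).comp (X + C (1 / 2))).Monic :=
    (monic_ascPochhammer ℚ c).comp (monic_X_add_C _) (by simp)
  rw [degree_eq_natDegree ((monic_descPochhammer ℚ m).mul hasc).ne_zero,
    (monic_descPochhammer ℚ m).natDegree_mul hasc]
  simp [natDegree_comp, descPochhammer_natDegree, ascPochhammer_natDegree]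

/-- For non-negative integers `c ≤ k` there is a rational polynomial `R` of degree `k`
such that `binom(L+c−1/2, k−1/2) = Γ(L+c+1/2)/(Γ(k+1/2)·(L+c−k)!)` equals
`(binom(2L,L)/4^L) · R(L)` for every non-negative integer `L` with `L + c ≥ k`. -/
theorem half_integer_binomial_as_central_binomial (c k : ℕ) (hck : c ≤ k) :
    ∃ R : Polynomial ℚ, R.degree = (k : ℕ) ∧
      ∀ L : ℕ, k ≤ L + c →
        Real.Gamma ((L : ℝ) + (c : ℝ) + 1 / 2) /
            (Real.Gamma ((k : ℝ) + 1 / 2) * (Nat.factorial (L + c - k) : ℝ)) =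
          (Nat.choose (2 * L) L : ℝ) / 4 ^ L * Polynomial.aeval (L : ℝ) R := by
  have hq : (4 ^ k / (k.centralBinom * k ! : ℚ)) ≠ 0 := by
    have := k.centralBinom_pos
    positivity
  refine ⟨C (4 ^ k / (k.centralBinom * k ! : ℚ)) *
      (descPochhammer ℚ (k - c) * (ascPochhammer ℚ c).comp (X + C (1 / 2))), ?_, fun L hL => ?_⟩
  · rw [degree_C_mul hq, degree_descPochhammer_mul_ascPochhammer_comp_add_half,
      Nat.sub_add_cancel hck]
  have hfac : ((L + c - k) ! * L.descFactorial (k - c) : ℝ) = L ! := by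
    rw [show L + c - k = L - (k - c) by omega]
    exact_mod_cast factorial_mul_descFactorial (by omega)
  have hGamma : Real.Gamma (L + c + 1 / 2) =
      Real.Gamma (L + 1 / 2) * (ascPochhammer ℝ c).eval ((L : ℝ) + 1 / 2) := by
    rw [add_right_comm]
    exact Real.Gamma_add_nat_eq_mul_ascPochhammer (by positivity) c
  rw [hGamma, Real.Gamma_nat_add_half_eq_centralBinom, Real.Gamma_nat_add_half_eq_centralBinom,
    map_mul, aeval_C, aeval_descPochhammer_mul_ascPochhammer_comp_add_half,
    descPochhammer_eval_eq_descFactorial, ← hfac, ← centralBinom_eq_two_mul_choose,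
    eq_ratCast]
  push_cast
  field_simp
end

section
/- Let k be a non-negative integer and let a₀, a₁, …, a_k be real numbers. Then there exists a polynomial P with real coefficients of degree at most k such that for every non-negative integer L: Σ_{i=0}^{min(L,k)} a_i · Γ(L − i + k + 1/2) / ( Γ(k + 1/2) · (L − i)! ) = ( binom(2L, L) / 4^L ) · P(L). -/
/-!
Since `Γ(L + 1/2) = √π · L! · binom(2L, L) / 4^L` and `L - i + k = L + (k - i)`, the `i`-th
summand is `a_i · √π / Γ(k + 1/2) · binom(2L, L) / 4^L` times
`L! / (L - i)! · (L + 1/2)(L + 3/2)⋯(L + k - i - 1/2)`, a falling factorial times a rising one: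
a polynomial in `L` of degree `k`. The falling factorial vanishes for `i > L`, so the sum may be
taken over all `i ≤ k`, independently of `L`.
-/

open Finset Nat Polynomial Real

theorem Nat.doubleFactorial_two_mul_sub_one_mul_two_pow (n : ℕ) :
    (2 * n - 1)‼ * 2 ^ n = n.centralBinom * n ! := by
  rcases n with _ | n
  · rfl
  refine Nat.eq_of_mul_eq_mul_left (Nat.factorial_pos (n + 1)) ?_
  have hdouble := Nat.factorial_eq_mul_doubleFactorial (2 * n + 1)
  have hbinom := Nat.choose_mul_factorial_mul_factorial (by omega : n + 1 ≤ 2 * (n + 1))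
  rw [show 2 * n + 1 + 1 = 2 * (n + 1) by ring, Nat.doubleFactorial_two_mul] at hdouble
  rw [show 2 * (n + 1) - (n + 1) = n + 1 by omega] at hbinom
  rw [show 2 * (n + 1) - 1 = 2 * n + 1 by omega, Nat.centralBinom]
  linarith

theorem Real.Gamma_nat_add_half_eq_centralBinom_s12 (n : ℕ) :
    Gamma (n + 1 / 2) = √π * n ! * n.centralBinom / 4 ^ n := by
  have h : ((2 * n - 1)‼ : ℝ) * 2 ^ n = n.centralBinom * n ! := by
    exact_mod_cast Nat.doubleFactorial_two_mul_sub_one_mul_two_pow n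
  rw [Real.Gamma_nat_add_half, show (4 : ℝ) ^ n = 2 ^ n * 2 ^ n by rw [← mul_pow]; norm_num]
  field_simp
  linear_combination h

theorem Real.Gamma_add_nat_eq_mul_ascPochhammer_s12 {x : ℝ} (hx : ∀ m : ℕ, x ≠ -m) (n : ℕ) :
    Gamma (x + n) = Gamma x * (ascPochhammer ℝ n).eval x := by
  induction n with
  | zero => simp
  | succ n ih =>
    have hxn : x + n ≠ 0 := fun h => hx n (by linarith)
    rw [Nat.cast_succ, ← add_assoc, Real.Gamma_add_one hxn, ih, ascPochhammer_succ_eval]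
    ring

noncomputable def descAscHalfPoly (k i : ℕ) : ℝ[X] :=
  descPochhammer ℝ i * (ascPochhammer ℝ (k - i)).comp (X + C (1 / 2))

theorem natDegree_descAscHalfPoly_le {k i : ℕ} (hik : i ≤ k) :
    (descAscHalfPoly k i).natDegree ≤ k := by
  unfold descAscHalfPoly
  refine natDegree_mul_le.trans ?_
  rw [descPochhammer_natDegree, natDegree_comp, ascPochhammer_natDegree, natDegree_X_add_C]
  omega

theorem eval_descAscHalfPoly (k i L : ℕ) :
    (descAscHalfPoly k i).eval (L : ℝ) =
      L.descFactorial i * (ascPochhammer ℝ (k - i)).eval ((L : ℝ) + 1 / 2) := by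
  simp [descAscHalfPoly, descPochhammer_eval_eq_descFactorial]

theorem eval_descAscHalfPoly_of_lt {k i L : ℕ} (hLi : L < i) :
    (descAscHalfPoly k i).eval (L : ℝ) = 0 := by
  simp [eval_descAscHalfPoly, Nat.descFactorial_eq_zero_iff_lt.mpr hLi]

theorem Real.Gamma_sub_add_half_div_factorial {L i k : ℕ} (hiL : i ≤ L) (hik : i ≤ k) :
    Gamma ((L : ℝ) - i + k + 1 / 2) / (L - i)! =
      √π * (L.centralBinom / 4 ^ L) * (descAscHalfPoly k i).eval (L : ℝ) := by
  have hhalf : ∀ m : ℕ, (L : ℝ) + 1 / 2 ≠ -m := fun m h => by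
    have : (0 : ℝ) ≤ L + m := by positivity
    linarith
  have hfac : ((L - i)! : ℝ) * L.descFactorial i = L ! := by
    exact_mod_cast Nat.factorial_mul_descFactorial hiL
  rw [show (L : ℝ) - i + k + 1 / 2 = L + 1 / 2 + (k - i : ℕ) by push_cast [hik]; ring,
    Real.Gamma_add_nat_eq_mul_ascPochhammer_s12 hhalf, Real.Gamma_nat_add_half_eq_centralBinom_s12,
    ← hfac, eval_descAscHalfPoly]
  field_simp

/-- For real numbers `a₀, …, a_k` there is a real polynomial `P` of degree at most `k`
with `Σ_{i=0}^{min(L,k)} a_i · binom(L−i+k−1/2, k−1/2) = (binom(2L,L)/4^L) · P(L)` for every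
non-negative integer `L`, where `binom(L−i+k−1/2, k−1/2) = Γ(L−i+k+1/2)/(Γ(k+1/2)·(L−i)!)`
(the left-hand side is the coefficient of `y^L` in `H(y)/(1−y)^{k+1/2}`). -/
theorem coeff_fractional_exponent_polynomial (k : ℕ) (a : ℕ → ℝ) :
    ∃ P : Polynomial ℝ, P.natDegree ≤ k ∧
      ∀ L : ℕ,
        ∑ i ∈ Finset.range (min L k + 1),
            a i * Real.Gamma ((L : ℝ) - (i : ℝ) + (k : ℝ) + 1 / 2) /
              (Real.Gamma ((k : ℝ) + 1 / 2) * (Nat.factorial (L - i) : ℝ)) =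
          (Nat.choose (2 * L) L : ℝ) / 4 ^ L * Polynomial.eval (L : ℝ) P := by
  refine ⟨∑ i ∈ range (k + 1), C (√π / Gamma (k + 1 / 2) * a i) * descAscHalfPoly k i,
    natDegree_sum_le_of_forall_le _ _ fun i hi => natDegree_C_mul_le _ _ |>.trans
      (natDegree_descAscHalfPoly_le (by simpa [Nat.lt_succ_iff] using hi)), fun L => ?_⟩
  have hsub : range (min L k + 1) ⊆ range (k + 1) := range_subset_range.mpr (by omega)
  rw [eval_finsetSum, mul_sum, ← sum_subset hsub fun i hik hiL => ?vanish]
  case vanish =>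
    simp only [mem_range] at hik hiL
    simp [eval_descAscHalfPoly_of_lt (by omega : L < i)]
  refine sum_congr rfl fun i hi => ?_
  simp only [mem_range] at hi
  rw [eval_C_mul, mul_div_assoc, div_mul_eq_div_div_swap,
    Real.Gamma_sub_add_half_div_factorial (by omega) (by omega), Nat.centralBinom]
  ring
end

section
/- Let n ≥ 1, h = ⌈n/2⌉, r ≥ 1, and let 1 ≤ i₁ < i₂ < … < i_r ≤ h be integers. Then the number of words w : {1,…,n} → {1,2} such that for every t ∈ {1,…,r} one has w(i_t) = 1 and #{j < i_t : w(j) = 1} = ⌊i_t/2⌋ equals 2^{n − i_r} · binom(i₁ − 1, ⌊i₁/2⌋) · ∏_{t=2}^{r} binom(i_t − i_{t−1} − 1, ⌊i_t/2⌋ − ⌊i_{t−1}/2⌋ − 1). -/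
open Finset

/-- Binomial coefficient with integer arguments: `0` whenever `b < 0` or `b > a`. -/
def ichoose (a b : ℤ) : ℕ := if 0 ≤ b ∧ b ≤ a then Nat.choose a.toNat b.toNat else 0

/-- Given a previous index `prev` and the list of subsequent indices, the product
`∏_t binom(i_t − i_{t−1} − 1, ⌊i_t/2⌋ − ⌊i_{t−1}/2⌋ − 1)` over consecutive pairs. -/
def chainProd : ℕ → List ℕ → ℕ
  | _, [] => 1
  | prev, x :: xs =>
      ichoose ((x : ℤ) - (prev : ℤ) - 1) ((x : ℤ) / 2 - (prev : ℤ) / 2 - 1) * chainProd x xs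

/-- For the list of indices `[i₁, …, i_r]`, the product
`binom(i₁−1, ⌊i₁/2⌋) · ∏_{t=2}^{r} binom(i_t − i_{t−1} − 1, ⌊i_t/2⌋ − ⌊i_{t−1}/2⌋ − 1)`. -/
def tupleWeight : List ℕ → ℕ
  | [] => 1
  | x :: xs => ichoose ((x : ℤ) - 1) ((x : ℤ) / 2) * chainProd x xs

/-- Position `p` (1-based) is a correct pile-1 guess for the word `w : Fin n → Bool`
(`w j = true` meaning `w(j) = 1`): `w(p) = 1` and `#{j < p : w(j) = 1} = ⌊p/2⌋`. -/
abbrev correctPileOne (n : ℕ) (w : Fin n → Bool) (p : ℕ) : Prop :=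
  ∃ j : Fin n, j.val + 1 = p ∧ w j = true ∧
    (Finset.univ.filter (fun j' : Fin n => j'.val + 1 < p ∧ w j' = true)).card = p / 2

/-! The conditions at positions `i₁ < ⋯ < i_r` only involve the first `i_r` letters, so the last
`n - i_r` letters are free. Within that prefix, the condition at `i_t` puts a `1` at `i_t`, and
given the condition at `i_{t-1}` (which forces `⌊i_{t-1}/2⌋ + 1` ones up to and including
`i_{t-1}`) it says exactly that the gap strictly between `i_{t-1}` and `i_t` holds
`⌊i_t/2⌋ - ⌊i_{t-1}/2⌋ - 1` ones. Peeling off the last constrained position by induction gives the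
product of binomial coefficients. -/

def numOnes {m : ℕ} (w : Fin m → Bool) : ℕ := #{j | w j = true}

theorem card_filter_fin_append {α : Type*} [Fintype α] {m k : ℕ}
    (P : (Fin m → α) → Prop) (Q : (Fin k → α) → Prop) [DecidablePred P] [DecidablePred Q] :
    #{w : Fin (m + k) → α | P (fun i ↦ w (Fin.castAdd k i)) ∧ Q (fun i ↦ w (Fin.natAdd m i))} =
      #{u | P u} * #{v | Q v} := by
  rw [← card_product]
  exact card_equiv (Fin.appendEquiv m k).symm fun w ↦ by simp

theorem numOnes_split {m k : ℕ} (w : Fin (m + k) → Bool) :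
    numOnes w = numOnes (fun i ↦ w (Fin.castAdd k i)) + numOnes (fun i ↦ w (Fin.natAdd m i)) := by
  simp only [numOnes, card_filter]
  exact Fin.sum_univ_add _

theorem card_numOnes_eq (m b : ℕ) : #{w : Fin m → Bool | numOnes w = b} = m.choose b := by
  have h := card_powersetCard b (univ : Finset (Fin m))
  rw [card_univ, Fintype.card_fin] at h
  rw [← h]
  apply card_nbij' (fun w : Fin m → Bool ↦ ({j | w j = true} : Finset (Fin m)))
    (fun s j ↦ decide (j ∈ s))
  · intro w hw
    rw [mem_coe, mem_filter] at hw
    simpa [numOnes] using hw.2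
  · intro s hs
    rw [mem_coe, mem_powersetCard] at hs
    rw [mem_coe, mem_filter]
    simpa [numOnes] using hs.2
  · intro w _; funext j; simp
  · intro s _; ext j; simp

theorem ichoose_natCast (a b : ℕ) : ichoose a b = a.choose b := by
  unfold ichoose
  split_ifs with h
  · simp
  · rw [Nat.choose_eq_zero_of_lt (by omega)]

theorem ichoose_of_neg {a b : ℤ} (h : b < 0) : ichoose a b = 0 :=
  if_neg fun hb ↦ by omega

theorem card_add_numOnes_eq (k a b : ℕ) :
    #{v : Fin k → Bool | a + numOnes v = b} = ichoose k ((b : ℤ) - a) := by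
  by_cases hab : a ≤ b
  · rw [show (b : ℤ) - a = ((b - a : ℕ) : ℤ) by omega, ichoose_natCast, ← card_numOnes_eq]
    congr 1
    exact filter_congr fun v _ ↦ by omega
  · rw [ichoose_of_neg (by omega), card_eq_zero, filter_eq_empty_iff]
    intro v _
    omega

theorem correctPileOne_castAdd_iff {m k q : ℕ} (w : Fin (m + k) → Bool) (hq : q ≤ m) :
    correctPileOne (m + k) w q ↔ correctPileOne m (fun i ↦ w (Fin.castAdd k i)) q := by
  have hcard : #{j : Fin (m + k) | j.val + 1 < q ∧ w j = true} =
      #{j : Fin m | j.val + 1 < q ∧ w (Fin.castAdd k j) = true} := by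
    rw [card_filter, card_filter, Fin.sum_univ_add]
    simp only [Fin.val_castAdd, add_eq_left]
    exact sum_eq_zero fun j _ ↦ if_neg fun h ↦ absurd h.1 (by simp only [Fin.val_natAdd]; omega)
  constructor
  · rintro ⟨j, hj, hw, hc⟩
    exact ⟨⟨j, by omega⟩, hj, hw, hcard ▸ hc⟩
  · rintro ⟨j, hj, hw, hc⟩
    exact ⟨Fin.castAdd k j, hj, hw, hcard ▸ hc⟩

theorem correctPileOne_succ_self_iff {m : ℕ} (w : Fin (m + 1) → Bool) :
    correctPileOne (m + 1) w (m + 1) ↔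
      numOnes (fun i ↦ w i.castSucc) = (m + 1) / 2 ∧ w (Fin.last m) = true := by
  have hcard : #{j : Fin (m + 1) | j.val + 1 < m + 1 ∧ w j = true} =
      numOnes (fun i ↦ w i.castSucc) := by
    rw [numOnes, card_filter, card_filter, Fin.sum_univ_castSucc]
    simp
  constructor
  · rintro ⟨j, hj, hw, hc⟩
    obtain rfl : j = Fin.last m := Fin.ext (by simp only [Fin.val_last]; omega)
    exact ⟨hcard ▸ hc, hw⟩
  · rintro ⟨hc, hw⟩
    exact ⟨Fin.last m, by simp, hw, hcard ▸ hc⟩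

theorem numOnes_of_correctPileOne_self {m : ℕ} (w : Fin m → Bool)
    (h : correctPileOne m w m) : numOnes w = m / 2 + 1 := by
  cases m with
  | zero => exact h.elim fun j _ ↦ j.elim0
  | succ m =>
    rw [correctPileOne_succ_self_iff] at h
    have hlast : w (Fin.natAdd m 0) = true := h.2
    rw [numOnes_split (k := 1), ← h.1]
    congr 1
    simp [numOnes, filter_singleton, hlast]

theorem chainProd_append_pair (p y x : ℕ) (l : List ℕ) :
    chainProd p (l ++ [y, x]) =
      chainProd p (l ++ [y]) * ichoose ((x : ℤ) - y - 1) ((x : ℤ) / 2 - (y : ℤ) / 2 - 1) := by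
  induction l generalizing p with
  | nil => simp [chainProd]
  | cons a l ih => simp only [List.cons_append, chainProd, ih, mul_assoc]

theorem tupleWeight_append_pair (y x : ℕ) (l : List ℕ) :
    tupleWeight (l ++ [y, x]) =
      tupleWeight (l ++ [y]) * ichoose ((x : ℤ) - y - 1) ((x : ℤ) / 2 - (y : ℤ) / 2 - 1) := by
  cases l with
  | nil => simp [tupleWeight, chainProd]
  | cons a l => simp only [List.cons_append, tupleWeight, chainProd_append_pair, mul_assoc]

theorem card_forall_correctPileOne_append_succ {m : ℕ} {l : List ℕ} (hl : ∀ p ∈ l, p ≤ m) :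
    #{u : Fin (m + 1) → Bool | ∀ p ∈ l ++ [m + 1], correctPileOne (m + 1) u p} =
      #{v : Fin m → Bool | (∀ p ∈ l, correctPileOne m v p) ∧ numOnes v = (m + 1) / 2} := by
  have key (u : Fin (m + 1) → Bool) : (∀ p ∈ l ++ [m + 1], correctPileOne (m + 1) u p) ↔
      ((∀ p ∈ l, correctPileOne m (fun i ↦ u (Fin.castAdd 1 i)) p) ∧
        numOnes (fun i ↦ u (Fin.castAdd 1 i)) = (m + 1) / 2) ∧
      (fun i ↦ u (Fin.natAdd m i)) 0 = true := by
    simp only [List.forall_mem_append, List.forall_mem_singleton, correctPileOne_succ_self_iff,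
      and_assoc]
    exact and_congr_left' (forall₂_congr fun p hp ↦ correctPileOne_castAdd_iff u (hl p hp))
  rw [filter_congr fun u _ ↦ key u,
    card_filter_fin_append (fun v ↦ (∀ p ∈ l, correctPileOne m v p) ∧ numOnes v = (m + 1) / 2)
      (fun z : Fin 1 → Bool ↦ z 0 = true)]
  rw [show #{z : Fin 1 → Bool | z 0 = true} = 1 by decide, mul_one]

theorem le_of_pairwise_lt_append_singleton {α : Type*} [Preorder α] {l : List α} {x : α}
    (h : (l ++ [x]).Pairwise (· < ·)) : ∀ p ∈ l ++ [x], p ≤ x := by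
  simp only [List.forall_mem_append, List.forall_mem_singleton]
  exact ⟨fun p hp ↦ ((List.pairwise_append.mp h).2.2 p hp x (List.mem_singleton_self x)).le,
    le_rfl⟩

theorem card_forall_correctPileOne_append_self {l : List ℕ} {x : ℕ}
    (hl : (l ++ [x]).Pairwise (· < ·)) :
    #{u : Fin x → Bool | ∀ p ∈ l ++ [x], correctPileOne x u p} = tupleWeight (l ++ [x]) := by
  induction l using List.reverseRecOn generalizing x with
  | nil =>
    cases x with
    | zero => simp [correctPileOne, tupleWeight, ichoose]
    | succ m =>
      rw [card_forall_correctPileOne_append_succ (by simp)]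
      simp [tupleWeight, chainProd, card_numOnes_eq, ← ichoose_natCast]
  | append_singleton l y ih =>
    obtain ⟨hly, -, hlx⟩ := List.pairwise_append.mp hl
    obtain ⟨s, rfl⟩ : ∃ s, x = y + s + 1 :=
      ⟨x - y - 1, by have := hlx y (by simp) x (by simp); omega⟩
    have key (v : Fin (y + s) → Bool) :
        ((∀ p ∈ l ++ [y], correctPileOne (y + s) v p) ∧ numOnes v = (y + s + 1) / 2) ↔
          (∀ p ∈ l ++ [y], correctPileOne y (fun i ↦ v (Fin.castAdd s i)) p) ∧
            y / 2 + 1 + numOnes (fun i ↦ v (Fin.natAdd y i)) = (y + s + 1) / 2 := by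
      rw [forall₂_congr fun p hp ↦
        correctPileOne_castAdd_iff v (le_of_pairwise_lt_append_singleton hly p hp), numOnes_split]
      exact and_congr_right fun h ↦ by rw [numOnes_of_correctPileOne_self _ (h y (by simp))]
    rw [card_forall_correctPileOne_append_succ fun p hp ↦ Nat.le_of_lt_succ (hlx p hp _ (by simp)),
      List.append_assoc, List.singleton_append, tupleWeight_append_pair, ← ih hly,
      filter_congr fun v _ ↦ key v,
      card_filter_fin_append (fun u ↦ ∀ p ∈ l ++ [y], correctPileOne y u p)
        (fun z ↦ y / 2 + 1 + numOnes z = (y + s + 1) / 2), card_add_numOnes_eq]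
    congr 2 <;> push_cast <;> omega

theorem card_forall_correctPileOne {n : ℕ} {l : List ℕ} (hl : l.Pairwise (· < ·))
    (hn : ∀ p ∈ l, p ≤ n) :
    #{w : Fin n → Bool | ∀ p ∈ l, correctPileOne n w p} =
      2 ^ (n - l.getLastD 0) * tupleWeight l := by
  rcases l.eq_nil_or_concat with rfl | ⟨l, x, rfl⟩
  · simp [tupleWeight]
  rw [List.concat_eq_append] at hl hn ⊢
  obtain ⟨k, rfl⟩ : ∃ k, n = x + k := ⟨n - x, by have := hn x (by simp); omega⟩
  have key (w : Fin (x + k) → Bool) : (∀ p ∈ l ++ [x], correctPileOne (x + k) w p) ↔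
      (∀ p ∈ l ++ [x], correctPileOne x (fun i ↦ w (Fin.castAdd k i)) p) ∧ True := by
    rw [and_true]
    exact forall₂_congr fun p hp ↦
      correctPileOne_castAdd_iff w (le_of_pairwise_lt_append_singleton hl p hp)
  rw [filter_congr fun w _ ↦ key w,
    card_filter_fin_append (fun u ↦ ∀ p ∈ l ++ [x], correctPileOne x u p) (fun _ ↦ True),
    card_forall_correctPileOne_append_self hl, List.getLastD_concat]
  simp [mul_comm]

theorem count_words_correct_at_positions_general
    (n : ℕ) (r : ℕ) (c : Fin r → ℕ)
    (hmono : StrictMono c) (hhigh : ∀ t, c t ≤ (n + 1) / 2) :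
    (Finset.univ.filter
        (fun w : Fin n → Bool => ∀ t : Fin r, correctPileOne n w (c t))).card =
      2 ^ (n - (List.ofFn c).getLastD 0) * tupleWeight (List.ofFn c) := by
  simp_rw [← List.forall_mem_ofFn_iff (P := correctPileOne n _)]
  exact card_forall_correctPileOne (List.pairwise_ofFn.mpr fun _ _ h ↦ hmono h)
    (List.forall_mem_ofFn_iff.mpr fun t ↦ (hhigh t).trans (by omega))

theorem count_words_correct_at_positions
    (n : ℕ) (hn : 1 ≤ n) (r : ℕ) (hr : 1 ≤ r) (c : Fin r → ℕ)
    (hmono : StrictMono c) (hlow : ∀ t, 1 ≤ c t) (hhigh : ∀ t, c t ≤ (n + 1) / 2) :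
    (Finset.univ.filter
        (fun w : Fin n → Bool => ∀ t : Fin r, correctPileOne n w (c t))).card =
      2 ^ (n - (List.ofFn c).getLastD 0) * tupleWeight (List.ofFn c) :=
  count_words_correct_at_positions_general n r c hmono hhigh
end

section
/- For every integer L ≥ 1: Σ_{i=1}^{2L} binom(i−1, ⌊i/2⌋) · (1/2^i) = (2L + 1/2) · binom(2L, L) / 4^L − 1/2. -/
/-!
Pairing the terms `i = 2n + 1` and `i = 2n + 2`, and using `2 * binom(2n+1, n+1) = binom(2n+2, n+1)`,
the sum becomes `∑_{n < L} (c n + c (n + 1)) / 2` with `c = centralBinomRatio`, `c n = binom(2n, n) / 4^n`. This telescopes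
against the right-hand side because of the recurrence `(2n + 2) c (n + 1) = (2n + 1) c n`.
-/

open Finset

theorem Finset.sum_Icc_one_two_mul {M : Type*} [AddCommMonoid M] (f : ℕ → M) (L : ℕ) :
    ∑ i ∈ Icc 1 (2 * L), f i = ∑ n ∈ range L, (f (2 * n + 1) + f (2 * n + 2)) := by
  induction L with
  | zero => simp
  | succ L ih =>
    rw [sum_range_succ, ← ih, show 2 * (L + 1) = 2 * L + 1 + 1 by ring,
      sum_Icc_succ_top (by omega), sum_Icc_succ_top (by omega), add_assoc]

theorem Nat.centralBinom_succ_eq_two_mul_choose (n : ℕ) :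
    centralBinom (n + 1) = 2 * (2 * n + 1).choose (n + 1) := by
  rw [centralBinom_eq_two_mul_choose, show 2 * (n + 1) = 2 * n + 1 + 1 by ring, choose_succ_succ,
    choose_symm_half]
  ring

noncomputable def centralBinomRatio (n : ℕ) : ℝ := n.centralBinom / 4 ^ n

theorem centralBinomRatio_zero : centralBinomRatio 0 = 1 := by
  simp [centralBinomRatio]

theorem two_mul_add_two_mul_centralBinomRatio_succ (n : ℕ) :
    (2 * n + 2) * centralBinomRatio (n + 1) = (2 * n + 1) * centralBinomRatio n := by
  have h : ((n + 1 : ℕ) : ℝ) * (n + 1).centralBinom = 2 * (2 * n + 1) * n.centralBinom := by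
    exact_mod_cast Nat.succ_mul_centralBinom_succ n
  simp only [centralBinomRatio, pow_succ]
  field_simp
  push_cast at h
  linear_combination 2 * h

theorem choose_pred_half_div_two_pow_pair (n : ℕ) :
    ((2 * n + 1 - 1).choose ((2 * n + 1) / 2) : ℝ) * (1 / 2 ^ (2 * n + 1)) +
      ((2 * n + 2 - 1).choose ((2 * n + 2) / 2) : ℝ) * (1 / 2 ^ (2 * n + 2)) =
      (centralBinomRatio n + centralBinomRatio (n + 1)) / 2 := by
  rw [show 2 * n + 1 - 1 = 2 * n by omega, show (2 * n + 1) / 2 = n by omega,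
    show 2 * n + 2 - 1 = 2 * n + 1 by omega, show (2 * n + 2) / 2 = n + 1 by omega,
    centralBinomRatio, centralBinomRatio, ← Nat.centralBinom_eq_two_mul_choose,
    Nat.centralBinom_succ_eq_two_mul_choose]
  have h4 : (4 : ℝ) ^ n = 2 ^ (2 * n) := by rw [pow_mul]; norm_num
  rw [pow_succ (4 : ℝ), h4]
  push_cast
  field_simp
  ring

theorem sum_range_centralBinomRatio_pair (L : ℕ) :
    ∑ n ∈ range L, (centralBinomRatio n + centralBinomRatio (n + 1)) / 2 =
      (2 * L + 1 / 2) * centralBinomRatio L - 1 / 2 := by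
  induction L with
  | zero => simp [centralBinomRatio_zero]
  | succ L ih =>
    rw [sum_range_succ, ih]
    push_cast
    linear_combination - two_mul_add_two_mul_centralBinomRatio_succ L

theorem sum_even_half_deck_general (L : ℕ) :
    ∑ i ∈ Finset.Icc 1 (2 * L), (Nat.choose (i - 1) (i / 2) : ℝ) * (1 / 2 ^ i) =
      (2 * (L : ℝ) + 1 / 2) * (Nat.choose (2 * L) L : ℝ) / 4 ^ L - 1 / 2 := by
  rw [sum_Icc_one_two_mul, sum_congr rfl fun n _ => choose_pred_half_div_two_pow_pair n,
    sum_range_centralBinomRatio_pair, centralBinomRatio, Nat.centralBinom_eq_two_mul_choose]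
  ring

theorem sum_even_half_deck (L : ℕ) (hL : 1 ≤ L) :
    ∑ i ∈ Finset.Icc 1 (2 * L), (Nat.choose (i - 1) (i / 2) : ℝ) * (1 / 2 ^ i) =
      (2 * (L : ℝ) + 1 / 2) * (Nat.choose (2 * L) L : ℝ) / 4 ^ L - 1 / 2 :=
  sum_even_half_deck_general L
end

section
/- For every integer L ≥ 1: Σ_{i=1}^{2L−1} binom(i−1, ⌊i/2⌋) · (1/2^i) = 2L · binom(2L, L) / 4^L − 1/2. -/
/-!
Write `c n = centralBinom n / 4 ^ n`. The summands with indices `2n + 2` and `2n + 3` are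
`C(2n+1, n+1) / 4^(n+1)` and `C(2n+2, n+1) / (2 · 4^(n+1))`; since `C(2n+2, n+1) = 2 C(2n+1, n+1)`,
together they contribute exactly `c (n + 1)`. On the other side,
`(n + 1) centralBinom (n + 1) = 2 (2n + 1) centralBinom n` gives `2(n+1) c (n+1) - 2n c n = c n`,
so both sides grow by the same amount from `L` to `L + 1`, and they agree at `L = 1`.
-/

open Finset

namespace Nat

theorem centralBinom_succ_eq_two_mul_choose_s17 (n : ℕ) :
    centralBinom (n + 1) = 2 * (2 * n + 1).choose (n + 1) := by
  rw [centralBinom_eq_two_mul_choose, show 2 * (n + 1) = 2 * n + 1 + 1 by ring, choose_succ_succ,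
    ← choose_symm_half]
  ring

theorem two_mul_centralBinom_div_four_pow_succ_sub (n : ℕ) :
    2 * (n + 1 : ℝ) * centralBinom (n + 1) / 4 ^ (n + 1) - 2 * n * centralBinom n / 4 ^ n =
      centralBinom n / 4 ^ n := by
  have key : (n + 1 : ℝ) * centralBinom (n + 1) = 2 * (2 * n + 1) * centralBinom n := by
    exact_mod_cast succ_mul_centralBinom_succ n
  rw [pow_succ]
  field_simp
  linear_combination 2 * key

theorem choose_div_two_pow_add_choose_div_two_pow (n : ℕ) :
    ((2 * n + 1).choose (n + 1) : ℝ) * (1 / 2 ^ (2 * n + 2)) +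
        ((2 * n + 2).choose (n + 1) : ℝ) * (1 / 2 ^ (2 * n + 3)) =
      centralBinom (n + 1) / 4 ^ (n + 1) := by
  have four_pow : (2 : ℝ) ^ (2 * n + 2) = 4 ^ (n + 1) := by
    rw [show 2 * n + 2 = 2 * (n + 1) by ring, pow_mul]; norm_num
  rw [show 2 * n + 3 = 2 * n + 2 + 1 by ring, pow_succ _ (2 * n + 2), four_pow,
    show 2 * n + 2 = 2 * (n + 1) by ring, ← centralBinom_eq_two_mul_choose,
    centralBinom_succ_eq_two_mul_choose_s17]
  push_cast
  field_simp
  ring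

end Nat

open Nat in
theorem sum_Icc_choose_pred_half_div_two_pow (n : ℕ) :
    ∑ i ∈ Icc 1 (2 * n + 1), ((i - 1).choose (i / 2) : ℝ) * (1 / 2 ^ i) =
      2 * (n + 1 : ℝ) * centralBinom (n + 1) / 4 ^ (n + 1) - 1 / 2 := by
  induction n with
  | zero => norm_num [centralBinom]
  | succ n ih =>
    rw [show 2 * (n + 1) + 1 = 2 * n + 1 + 1 + 1 by ring, sum_Icc_succ_top (by omega),
      sum_Icc_succ_top (by omega), ih, add_assoc]
    simp only [show 2 * n + 1 + 1 - 1 = 2 * n + 1 by omega,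
      show 2 * n + 1 + 1 + 1 - 1 = 2 * n + 2 by omega,
      show (2 * n + 1 + 1) / 2 = n + 1 by omega, show (2 * n + 1 + 1 + 1) / 2 = n + 1 by omega]
    rw [show 2 * n + 1 + 1 = 2 * n + 2 by ring, show 2 * n + 1 + 1 + 1 = 2 * n + 3 by ring,
      choose_div_two_pow_add_choose_div_two_pow]
    have step := two_mul_centralBinom_div_four_pow_succ_sub (n + 1)
    push_cast at step ⊢
    linarith

theorem sum_odd_half_deck (L : ℕ) (hL : 1 ≤ L) :
    ∑ i ∈ Finset.Icc 1 (2 * L - 1), (Nat.choose (i - 1) (i / 2) : ℝ) * (1 / 2 ^ i) =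
      2 * (L : ℝ) * (Nat.choose (2 * L) L : ℝ) / 4 ^ L - 1 / 2 := by
  obtain ⟨n, rfl⟩ := Nat.exists_eq_add_of_le' hL
  rw [show 2 * (n + 1) - 1 = 2 * n + 1 by omega, sum_Icc_choose_pred_half_div_two_pow,
    Nat.centralBinom_eq_two_mul_choose]
  push_cast
  ring
end
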